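/- arXiv:2507.11784 — 5 statements merged into one kernel-verified Lean document; each statement's English description precedes it below -/
import Mathlib

section
/- The projected Gamma density PG(θ|α₁,α₂,β) = β^{α₂} cos(θ)^{α₁-1} sin(θ)^{α₂-1} / (B(α₁,α₂) (cos θ + β sin θ)^{α₁+α₂}) integrates to 1 over θ ∈ [0, π/2]. -/
/-!
The substitution `x = b sin θ / (cos θ + b sin θ)` increases from `0` to `1` on `[0, π/2]` with
`dx/dθ = b / (cos θ + b sin θ)²`, and it turns `PG(θ | α₁, α₂, b) dθ` into the Beta density
`x^(α₂-1) (1-x)^(α₁-1) / B(α₁, α₂) dx`, whose integral is `1`.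
-/

open Real MeasureTheory intervalIntegral

/-- The projected Gamma density on `[0, π/2]`, with
`B(α₁,α₂) = Γ(α₁)Γ(α₂)/Γ(α₁+α₂)` the Beta function. -/
noncomputable def PG (a1 a2 b θ : ℝ) : ℝ :=
  b ^ a2 * Real.cos θ ^ (a1 - 1) * Real.sin θ ^ (a2 - 1) /
    (Real.Gamma a1 * Real.Gamma a2 / Real.Gamma (a1 + a2) *
      (Real.cos θ + b * Real.sin θ) ^ (a1 + a2))

open Set ProbabilityTheory

theorem integral_rpow_mul_one_sub_rpow_eq_beta {p q : ℝ} (hp : 0 < p) (hq : 0 < q) :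
    ∫ x in (0 : ℝ)..1, x ^ (p - 1) * (1 - x) ^ (q - 1) = beta p q := by
  have hcomplex : Complex.betaIntegral p q =
      ↑(∫ x in (0 : ℝ)..1, x ^ (p - 1) * (1 - x) ^ (q - 1)) := by
    rw [Complex.betaIntegral, ← intervalIntegral.integral_ofReal]
    refine intervalIntegral.integral_congr fun x hx => ?_
    rw [uIcc_of_le zero_le_one] at hx
    simp [Complex.ofReal_cpow hx.1, Complex.ofReal_cpow (sub_nonneg.2 hx.2)]
  rw [beta_eq_betaIntegralReal p q hp hq, hcomplex, Complex.ofReal_re]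

theorem cos_add_mul_sin_pos {b θ : ℝ} (hb : 0 < b) (hθ : θ ∈ Icc 0 (π / 2)) :
    0 < cos θ + b * sin θ := by
  rcases eq_or_lt_of_le hθ.2 with rfl | hlt
  · simpa using hb
  have hc : 0 < cos θ := cos_pos_of_mem_Ioo ⟨by linarith [hθ.1, pi_pos], hlt⟩
  have hs : 0 ≤ sin θ := sin_nonneg_of_nonneg_of_le_pi hθ.1 (by linarith [pi_pos])
  positivity

theorem rpow_div_add_mul_rpow_div_add_div_sq {u v : ℝ} (p q : ℝ) (hu : 0 ≤ u) (hv : 0 ≤ v)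
    (h : 0 < u + v) :
    (v / (u + v)) ^ (q - 1) * (u / (u + v)) ^ (p - 1) / (u + v) ^ 2
      = u ^ (p - 1) * v ^ (q - 1) / (u + v) ^ (p + q) := by
  have hsplit : (u + v) ^ (p + q) = (u + v) ^ (q - 1) * (u + v) ^ (p - 1) * (u + v) ^ 2 := by
    rw [← rpow_natCast, ← rpow_add h, ← rpow_add h]; congr 1; push_cast; ring
  rw [div_rpow hv h.le, div_rpow hu h.le, hsplit]
  have := rpow_pos_of_pos h (q - 1)
  have := rpow_pos_of_pos h (p - 1)
  field_simp

noncomputable def pgSubst (b θ : ℝ) : ℝ :=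
  b * sin θ / (cos θ + b * sin θ)

theorem hasDerivAt_pgSubst {b θ : ℝ} (hD : cos θ + b * sin θ ≠ 0) :
    HasDerivAt (pgSubst b) (b / (cos θ + b * sin θ) ^ 2) θ := by
  have hnum := (hasDerivAt_sin θ).const_mul b
  have hden : HasDerivAt (fun t => cos t + b * sin t) (-sin θ + b * cos θ) θ :=
    (hasDerivAt_cos θ).add ((hasDerivAt_sin θ).const_mul b)
  have hquot := hnum.div hden hD
  rwa [show b * cos θ * (cos θ + b * sin θ) - b * sin θ * (-sin θ + b * cos θ) = b by
    linear_combination b * sin_sq_add_cos_sq θ] at hquot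

theorem pgSubst_pi_div_two {b : ℝ} (hb : b ≠ 0) : pgSubst b (π / 2) = 1 := by
  simp [pgSubst, hb]

theorem PG_eq_pgSubst {a1 a2 b θ : ℝ} (hb : 0 < b) (hθ : θ ∈ Icc 0 (π / 2)) :
    PG a1 a2 b θ = (beta a1 a2)⁻¹ * (pgSubst b θ ^ (a2 - 1) * (1 - pgSubst b θ) ^ (a1 - 1) *
      (b / (cos θ + b * sin θ) ^ 2)) := by
  have hD := cos_add_mul_sin_pos hb hθ
  have hc : 0 ≤ cos θ := cos_nonneg_of_mem_Icc ⟨by linarith [hθ.1, pi_pos], hθ.2⟩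
  have hs : 0 ≤ sin θ := sin_nonneg_of_nonneg_of_le_pi hθ.1 (by linarith [hθ.2, pi_pos])
  have hcompl : 1 - pgSubst b θ = cos θ / (cos θ + b * sin θ) := by
    rw [pgSubst]; field_simp; ring
  have hb_pow : b ^ a2 * sin θ ^ (a2 - 1) = b * (b * sin θ) ^ (a2 - 1) := by
    have hsplit := rpow_add hb 1 (a2 - 1)
    rw [add_sub_cancel, rpow_one] at hsplit
    rw [hsplit, mul_rpow hb.le hs]; ring
  have key := rpow_div_add_mul_rpow_div_add_div_sq a1 a2 hc (mul_nonneg hb.le hs) hD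
  rw [hcompl, pgSubst, PG, ← beta, mul_right_comm (b ^ a2), hb_pow]
  linear_combination (-(beta a1 a2)⁻¹ * b) * key

/-- the projected Gamma density integrates to 1 over `[0, π/2]`. -/
theorem PG_integral_eq_one (a1 a2 b : ℝ) (ha1 : 0 < a1) (ha2 : 0 < a2) (hb : 0 < b) :
    ∫ θ in (0:ℝ)..(π / 2), PG a1 a2 b θ = 1 := by
  have hpi : 0 ≤ π / 2 := by positivity
  have hderiv : ∀ θ ∈ Icc 0 (π / 2),
      HasDerivAt (pgSubst b) (b / (cos θ + b * sin θ) ^ 2) θ :=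
    fun θ hθ => hasDerivAt_pgSubst (cos_add_mul_sin_pos hb hθ).ne'
  set g : ℝ → ℝ := fun x => x ^ (a2 - 1) * (1 - x) ^ (a1 - 1)
  calc ∫ θ in (0:ℝ)..(π / 2), PG a1 a2 b θ
      = (beta a1 a2)⁻¹ * ∫ θ in (0:ℝ)..(π / 2),
          (g ∘ pgSubst b) θ * (b / (cos θ + b * sin θ) ^ 2) := by
        rw [← intervalIntegral.integral_const_mul]
        refine integral_congr fun θ hθ => ?_
        rw [uIcc_of_le hpi] at hθ
        exact PG_eq_pgSubst hb hθ
    _ = (beta a1 a2)⁻¹ * ∫ x in (0:ℝ)..1, g x := by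
        rw [integral_comp_mul_deriv_of_deriv_nonneg (f := pgSubst b), pgSubst_pi_div_two hb.ne']
        · simp [pgSubst]
        · rw [uIcc_of_le hpi]
          exact fun θ hθ => (hderiv θ hθ).continuousAt.continuousWithinAt
        · rw [min_eq_left hpi, max_eq_right hpi]
          exact fun θ hθ => hderiv θ (Ioo_subset_Icc_self hθ)
        · exact fun θ _ => by positivity
    _ = 1 := by
        rw [integral_rpow_mul_one_sub_rpow_eq_beta ha2 ha1,
          show beta a2 a1 = beta a1 a2 by rw [beta, beta, mul_comm, add_comm],
          inv_mul_cancel₀ (beta_pos ha1 ha2).ne']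
end

section
/- If X ~ Gamma(α₁, 1) and Y ~ Gamma(α₂, β) are independent (with β a rate parameter), then the angle θ = arctan(Y/X) has the projected Gamma density PG(θ|α₁,α₂,β) on [0, π/2]. -/
/-!
In polar coordinates `(x, y) = (r cos θ, r sin θ)` the joint density of `(X, Y)` times the Jacobian
`r` factorises as `PG(θ) · gammaPDF (α₁ + α₂) (cos θ + β sin θ) r`, so integrating out `r` leaves
`PG(θ)`. On the right half-plane, which carries all the mass, `arctan (y / x)` is the polar angle.
-/

open Real MeasureTheory ProbabilityTheory

open Set
open scoped ENNReal

lemma arctan_mul_sin_div_mul_cos {r θ : ℝ} (hr : 0 < r) (hθ : θ ∈ Ioo (-(π / 2)) (π / 2)) :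
    arctan (r * sin θ / (r * cos θ)) = θ := by
  rw [mul_div_mul_left _ _ hr.ne', ← tan_eq_sin_div_cos, arctan_tan hθ.1 hθ.2]

lemma cos_neg_of_pi_div_two_lt_abs {θ : ℝ} (h₁ : π / 2 < |θ|) (h₂ : |θ| < π) : cos θ < 0 := by
  rw [← cos_abs]
  exact cos_neg_of_pi_div_two_lt_of_lt h₁ (by linarith [pi_pos])

lemma setLIntegral_Ioi_indicator_preimage_arctan_div {F : ℝ × ℝ → ℝ≥0∞}
    (hF_neg : ∀ p : ℝ × ℝ, p.1 < 0 → F p = 0) (s : Set ℝ) {θ : ℝ} (hθ : θ ∈ Ioo (-π) π)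
    (hθ₁ : θ ≠ π / 2) (hθ₂ : θ ≠ -(π / 2)) :
    ∫⁻ r in Ioi 0, ENNReal.ofReal r *
        ((fun p : ℝ × ℝ => arctan (p.2 / p.1)) ⁻¹' s).indicator F (r * cos θ, r * sin θ) =
      (s ∩ Ioo (-(π / 2)) (π / 2)).indicator
        (fun θ => ∫⁻ r in Ioi 0, ENNReal.ofReal r * F (r * cos θ, r * sin θ)) θ := by
  by_cases hθI : θ ∈ Ioo (-(π / 2)) (π / 2)
  · have h_preimage : ∀ r ∈ Ioi (0 : ℝ),
        (r * cos θ, r * sin θ) ∈ (fun p : ℝ × ℝ => arctan (p.2 / p.1)) ⁻¹' s ↔ θ ∈ s :=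
      fun r hr => by simp only [mem_preimage, arctan_mul_sin_div_mul_cos hr hθI]
    by_cases hθs : θ ∈ s
    · rw [indicator_of_mem (mem_inter hθs hθI)]
      refine setLIntegral_congr_fun measurableSet_Ioi fun r hr => ?_
      rw [indicator_of_mem ((h_preimage r hr).2 hθs)]
    · rw [indicator_of_notMem (fun h => hθs h.1), ← lintegral_zero]
      refine setLIntegral_congr_fun measurableSet_Ioi fun r hr => ?_
      rw [indicator_of_notMem (mt (h_preimage r hr).1 hθs), mul_zero]
  · have h_cos : cos θ < 0 := by
      refine cos_neg_of_pi_div_two_lt_abs (lt_of_le_of_ne (not_lt.1 (mt abs_lt.1 hθI)) ?_)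
        (abs_lt.2 hθ)
      rw [ne_comm, ne_eq, abs_eq (by positivity)]
      tauto
    rw [indicator_of_notMem (fun h => hθI h.2), ← lintegral_zero]
    refine setLIntegral_congr_fun measurableSet_Ioi fun r hr => ?_
    rw [indicator_apply_eq_zero.2 fun _ => hF_neg _ (mul_neg_of_pos_of_neg hr h_cos), mul_zero]

theorem map_arctan_div_withDensity {F : ℝ × ℝ → ℝ≥0∞} (hF : Measurable F)
    (hF_neg : ∀ p : ℝ × ℝ, p.1 < 0 → F p = 0) :
    (volume.withDensity F).map (fun p => arctan (p.2 / p.1)) =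
      volume.withDensity ((Ioo (-(π / 2)) (π / 2)).indicator
        fun θ => ∫⁻ r in Ioi 0, ENNReal.ofReal r * F (r * cos θ, r * sin θ)) := by
  set angle : ℝ × ℝ → ℝ := fun p => arctan (p.2 / p.1)
  have h_angle : Measurable angle := by fun_prop
  ext s hs
  have h_meas : Measurable fun p : ℝ × ℝ =>
      ENNReal.ofReal p.1 • (angle ⁻¹' s).indicator F (polarCoord.symm p) :=
    ENNReal.measurable_ofReal.comp measurable_fst |>.smul <|
      (hF.indicator (h_angle hs)).comp continuous_polarCoord_symm.measurable
  rw [Measure.map_apply h_angle hs, withDensity_apply _ (h_angle hs), withDensity_apply _ hs,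
    ← lintegral_indicator (h_angle hs), ← lintegral_comp_polarCoord_symm, polarCoord_target,
    Measure.volume_eq_prod, ← Measure.prod_restrict, lintegral_prod_symm _ h_meas.aemeasurable,
    ← lintegral_indicator measurableSet_Ioo, ← lintegral_indicator hs, indicator_indicator]
  refine lintegral_congr_ae ?_
  filter_upwards [Measure.ae_ne volume (π / 2), Measure.ae_ne volume (-(π / 2))] with θ hθ₁ hθ₂
  by_cases hθ : θ ∈ Ioo (-π) π
  · rw [indicator_of_mem hθ]
    exact setLIntegral_Ioi_indicator_preimage_arctan_div hF_neg s hθ hθ₁ hθ₂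
  · rw [indicator_of_notMem hθ, indicator_of_notMem fun h => hθ ⟨?_, ?_⟩] <;>
      linarith [h.2.1, h.2.2, pi_pos]

lemma PG_nonneg {a1 a2 b θ : ℝ} (ha1 : 0 < a1) (ha2 : 0 < a2) (hb : 0 ≤ b)
    (hc : 0 < cos θ) (hs : 0 < sin θ) : 0 ≤ PG a1 a2 b θ := by
  have := Gamma_pos_of_pos ha1
  have := Gamma_pos_of_pos ha2
  have := Gamma_pos_of_pos (add_pos ha1 ha2)
  unfold PG
  positivity

lemma mul_gammaPDFReal_mul_gammaPDFReal_eq_PG_mul {a1 a2 b r θ : ℝ} (ha1 : 0 < a1) (ha2 : 0 < a2)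
    (hb : 0 ≤ b) (hr : 0 < r) (hc : 0 < cos θ) (hs : 0 < sin θ) :
    r * (gammaPDFReal a1 1 (r * cos θ) * gammaPDFReal a2 b (r * sin θ)) =
      PG a1 a2 b θ * gammaPDFReal (a1 + a2) (cos θ + b * sin θ) r := by
  have hk : 0 < cos θ + b * sin θ := by positivity
  have := (Gamma_pos_of_pos ha1).ne'
  have := (Gamma_pos_of_pos ha2).ne'
  have := (Gamma_pos_of_pos (add_pos ha1 ha2)).ne'
  have := (rpow_pos_of_pos hk (a1 + a2)).ne'
  have h_pow : r * (r ^ (a1 - 1) * r ^ (a2 - 1)) = r ^ (a1 + a2 - 1) := by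
    rw [show a1 + a2 - 1 = 1 + ((a1 - 1) + (a2 - 1)) by ring, rpow_add hr, rpow_add hr, rpow_one]
  have h_exp : exp (-(1 * (r * cos θ))) * exp (-(b * (r * sin θ))) =
      exp (-((cos θ + b * sin θ) * r)) := by
    rw [← exp_add]; ring_nf
  simp only [gammaPDFReal, PG, if_pos hr.le, if_pos (mul_pos hr hc).le, if_pos (mul_pos hr hs).le,
    mul_rpow hr.le hc.le, mul_rpow hr.le hs.le, one_rpow]
  rw [← h_pow, ← h_exp]
  field_simp

lemma setLIntegral_Ioi_gammaPDF_eq_one {a r : ℝ} (ha : 0 < a) (hr : 0 < r) :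
    ∫⁻ x in Ioi 0, gammaPDF a r x = 1 := by
  have h_Iic : ∫⁻ x in Iic 0, gammaPDF a r x = 0 := by
    rw [setLIntegral_congr Iio_ae_eq_Iic.symm, lintegral_gammaPDF_of_nonpos le_rfl]
  rw [← lintegral_gammaPDF_eq_one ha hr, ← lintegral_add_compl (μ := volume) _ measurableSet_Ioi,
    compl_Ioi, h_Iic, add_zero]

lemma setLIntegral_Ioi_polar_gammaPDF_mul_gammaPDF {a1 a2 b θ : ℝ} (ha1 : 0 < a1) (ha2 : 0 < a2)
    (hb : 0 ≤ b) (hc : 0 < cos θ) (hs : 0 < sin θ) :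
    ∫⁻ r in Ioi 0, ENNReal.ofReal r * (gammaPDF a1 1 (r * cos θ) * gammaPDF a2 b (r * sin θ)) =
      ENNReal.ofReal (PG a1 a2 b θ) := by
  calc _ = ∫⁻ r in Ioi 0, ENNReal.ofReal (PG a1 a2 b θ) *
        gammaPDF (a1 + a2) (cos θ + b * sin θ) r := by
        refine setLIntegral_congr_fun measurableSet_Ioi fun r (hr : 0 < r) => ?_
        simp only [gammaPDF]
        rw [← ENNReal.ofReal_mul (gammaPDFReal_nonneg ha1 one_pos _), ← ENNReal.ofReal_mul hr.le,
          ← ENNReal.ofReal_mul (PG_nonneg ha1 ha2 hb hc hs),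
          mul_gammaPDFReal_mul_gammaPDFReal_eq_PG_mul ha1 ha2 hb hr hc hs]
    _ = _ := by
      rw [lintegral_const_mul _ (measurable_gammaPDFReal _ _).ennreal_ofReal (f := gammaPDF _ _),
        setLIntegral_Ioi_gammaPDF_eq_one (add_pos ha1 ha2) (by positivity), mul_one]

lemma indicator_setLIntegral_Ioi_polar_gammaPDF_ae_eq {a1 a2 b : ℝ} (ha1 : 0 < a1) (ha2 : 0 < a2)
    (hb : 0 ≤ b) :
    (Ioo (-(π / 2)) (π / 2)).indicator (fun θ => ∫⁻ r in Ioi 0,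
        ENNReal.ofReal r * (gammaPDF a1 1 (r * cos θ) * gammaPDF a2 b (r * sin θ)))
      =ᵐ[volume] fun θ => ENNReal.ofReal ((Icc 0 (π / 2)).indicator (PG a1 a2 b) θ) := by
  filter_upwards [Measure.ae_ne volume 0, Measure.ae_ne volume (π / 2)] with θ hθ₀ hθ₁
  rcases lt_or_gt_of_ne hθ₀ with hθ_neg | hθ_pos
  · rw [indicator_of_notMem (show θ ∉ Icc 0 (π / 2) from fun h => not_lt.2 h.1 hθ_neg),
      ENNReal.ofReal_zero]
    by_cases hθI : θ ∈ Ioo (-(π / 2)) (π / 2)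
    · have h_sin : sin θ < 0 := sin_neg_of_neg_of_neg_pi_lt hθ_neg (by linarith [hθI.1, pi_pos])
      rw [indicator_of_mem hθI, ← lintegral_zero]
      refine setLIntegral_congr_fun measurableSet_Ioi fun r (hr : 0 < r) => ?_
      rw [gammaPDF_of_neg (mul_neg_of_pos_of_neg hr h_sin), mul_zero, mul_zero]
    · rw [indicator_of_notMem hθI]
  rcases lt_or_gt_of_ne hθ₁ with hθ_lt | hθ_gt
  · rw [indicator_of_mem (show θ ∈ Ioo (-(π / 2)) (π / 2) from ⟨by linarith [pi_pos], hθ_lt⟩),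
      indicator_of_mem (show θ ∈ Icc 0 (π / 2) from ⟨hθ_pos.le, hθ_lt.le⟩)]
    exact setLIntegral_Ioi_polar_gammaPDF_mul_gammaPDF ha1 ha2 hb
      (cos_pos_of_mem_Ioo ⟨by linarith [pi_pos], hθ_lt⟩)
      (sin_pos_of_pos_of_lt_pi hθ_pos (by linarith [pi_pos]))
  · rw [indicator_of_notMem (show θ ∉ Ioo (-(π / 2)) (π / 2) from fun h => lt_asymm hθ_gt h.2),
      indicator_of_notMem (show θ ∉ Icc 0 (π / 2) from fun h => not_le.2 hθ_gt h.2),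
      ENNReal.ofReal_zero]

theorem arctan_ratio_gamma_has_PG_density_general
    {Ω : Type*} [MeasureSpace Ω]
    (a1 a2 b : ℝ) (ha1 : 0 < a1) (ha2 : 0 < a2) (hb : 0 < b)
    (X Y : Ω → ℝ) (hX : Measurable X) (hY : Measurable Y)
    (hXlaw : Measure.map X ℙ = gammaMeasure a1 1)
    (hYlaw : Measure.map Y ℙ = gammaMeasure a2 b)
    (hindep : IndepFun X Y ℙ) :
    Measure.map (fun ω => Real.arctan (Y ω / X ω)) ℙ =
      volume.withDensity
        (fun θ => ENNReal.ofReal (Set.indicator (Set.Icc 0 (π / 2)) (PG a1 a2 b) θ)) := by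
  have := isProbabilityMeasure_gammaMeasure ha1 one_pos
  have := isProbabilityMeasure_gammaMeasure ha2 hb
  have h_joint : Measure.map (fun ω => (X ω, Y ω)) ℙ =
      volume.withDensity fun p : ℝ × ℝ => gammaPDF a1 1 p.1 * gammaPDF a2 b p.2 := by
    rw [(indepFun_iff_map_prod_eq_prod_map_map' hX.aemeasurable hY.aemeasurable
        (by rw [hXlaw]; infer_instance) (by rw [hYlaw]; infer_instance)).1 hindep,
      hXlaw, hYlaw, gammaMeasure, gammaMeasure,
      prod_withDensity (f := gammaPDF a1 1) (g := gammaPDF a2 b)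
        (measurable_gammaPDFReal _ _).ennreal_ofReal (measurable_gammaPDFReal _ _).ennreal_ofReal,
      Measure.volume_eq_prod]
  have h_angle : Measurable fun p : ℝ × ℝ => arctan (p.2 / p.1) := by fun_prop
  refine (Measure.map_map h_angle (hX.prodMk hY)).symm.trans ?_
  rw [h_joint,
    map_arctan_div_withDensity (by unfold gammaPDF; fun_prop)
      fun p hp => by rw [gammaPDF_of_neg hp, zero_mul]]
  exact withDensity_congr_ae (indicator_setLIntegral_Ioi_polar_gammaPDF_ae_eq ha1 ha2 hb.le)

/-- if `X ~ Gamma(α₁, 1)` and `Y ~ Gamma(α₂, β)` are independent (rate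
parametrization), then `θ = arctan (Y / X)` has the projected Gamma density
`PG(θ | α₁, α₂, β)` on `[0, π/2]`. -/
theorem arctan_ratio_gamma_has_PG_density
    {Ω : Type*} [MeasureSpace Ω] (hP : IsProbabilityMeasure (ℙ : Measure Ω))
    (a1 a2 b : ℝ) (ha1 : 0 < a1) (ha2 : 0 < a2) (hb : 0 < b)
    (X Y : Ω → ℝ) (hX : Measurable X) (hY : Measurable Y)
    (hXlaw : Measure.map X ℙ = gammaMeasure a1 1)
    (hYlaw : Measure.map Y ℙ = gammaMeasure a2 b)
    (hindep : IndepFun X Y ℙ) :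
    Measure.map (fun ω => Real.arctan (Y ω / X ω)) ℙ =
      volume.withDensity
        (fun θ => ENNReal.ofReal (Set.indicator (Set.Icc 0 (π / 2)) (PG a1 a2 b) θ)) :=
  arctan_ratio_gamma_has_PG_density_general a1 a2 b ha1 ha2 hb X Y hX hY hXlaw hYlaw hindep
end

section
/- Sklar's theorem (bivariate case): if H is a bivariate distribution function with continuous marginals F₁ and F₂, then there exists a unique copula C such that H(x,y) = C(F₁(x), F₂(y)) for all x, y ∈ ℝ. -/
/-! For `x ≤ x'` the 2-increasing property squeezes `H x' y - H x y` between its limits as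
`y → -∞` and `y → ∞`, i.e. `0 ≤ H x' y - H x y ≤ F₁ x' - F₁ x`, and symmetrically in `y`.
So `H` is a Lipschitz function `G` of `(F₁ x, F₂ y)`, and McShane's extension defines `G` on all
of `ℝ²`. Continuous margins take every value in `(0,1)`, so on `(0,1)²` the function `G` inherits
2-increasingness and the Fréchet–Hoeffding bounds `max 0 (u + v - 1) ≤ G ≤ min u v` from `H`;
by continuity both hold on `[0,1]²`, and the bounds pin down the boundary values of a copula.
Uniqueness: a copula is determined by its values on `(0,1)²`, where `C (F₁ x) (F₂ y) = H x y`
fixes them. -/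

open Real Filter Topology

/-- A bivariate copula: `C(u,0) = C(0,v) = 0`, `C(u,1) = u`, `C(1,v) = v`, and
2-increasingness on `[0,1]²`. -/
def IsCopula2 (C : ℝ → ℝ → ℝ) : Prop :=
  (∀ u ∈ Set.Icc (0:ℝ) 1, C u 0 = 0 ∧ C 0 u = 0 ∧ C u 1 = u ∧ C 1 u = u) ∧
  (∀ a₁ b₁ a₂ b₂ : ℝ, a₁ ∈ Set.Icc (0:ℝ) 1 → b₁ ∈ Set.Icc (0:ℝ) 1 →
    a₂ ∈ Set.Icc (0:ℝ) 1 → b₂ ∈ Set.Icc (0:ℝ) 1 → a₁ ≤ b₁ → a₂ ≤ b₂ →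
      0 ≤ C b₁ b₂ - C a₁ b₂ - C b₁ a₂ + C a₁ a₂)

open Set

theorem exists_lipschitzWith_comp_eq {α β : Type*} [Nonempty α] [PseudoMetricSpace β]
    {K : NNReal} {Φ : α → β} {f : α → ℝ} (hf : ∀ a b, dist (f a) (f b) ≤ K * dist (Φ a) (Φ b)) :
    ∃ g : β → ℝ, LipschitzWith K g ∧ ∀ a, f a = g (Φ a) := by
  have hfactor : ∀ a, f (Function.invFun Φ (Φ a)) = f a := fun a =>
    dist_le_zero.1 (by simpa [Function.invFun_eq ⟨a, rfl⟩] using hf (Function.invFun Φ (Φ a)) a)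
  have hlip : LipschitzOnWith K (f ∘ Function.invFun Φ) (range Φ) := by
    refine LipschitzOnWith.of_dist_le_mul ?_
    rintro _ ⟨a, rfl⟩ _ ⟨b, rfl⟩
    simpa only [Function.comp_apply, hfactor] using hf a b
  obtain ⟨g, hg, hfg⟩ := hlip.extend_real
  exact ⟨g, hg, fun a => by rw [← hfg (mem_range_self a), Function.comp_apply, hfactor]⟩

theorem Monotone.exists_le_of_le_of_mem_range {α β : Type*} [LinearOrder α] [PartialOrder β]
    {f : α → β} (hf : Monotone f) {a b : β} (hab : a ≤ b) (ha : a ∈ range f)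
    (hb : b ∈ range f) : ∃ x x', x ≤ x' ∧ f x = a ∧ f x' = b := by
  obtain ⟨x, rfl⟩ := ha
  obtain ⟨x', rfl⟩ := hb
  rcases hab.eq_or_lt with h | h
  · exact ⟨x, x, le_rfl, rfl, h⟩
  · exact ⟨x, x', (hf.reflect_lt h).le, rfl, rfl⟩

theorem tendsto_mul_add_one_sub_div_two (u : ℝ) :
    Tendsto (fun t : ℝ => t * u + (1 - t) / 2) (𝓝[<] 1) (𝓝 u) := by
  have : Continuous fun t : ℝ => t * u + (1 - t) / 2 := by fun_prop
  simpa using (this.tendsto 1).mono_left nhdsWithin_le_nhds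

theorem mul_add_one_sub_div_two_mem_Ioo {t u : ℝ} (ht : t ∈ Ioo 0 1) (hu : u ∈ Icc 0 1) :
    t * u + (1 - t) / 2 ∈ Ioo 0 1 := by
  obtain ⟨ht₀, ht₁⟩ := ht
  obtain ⟨hu₀, hu₁⟩ := hu
  constructor <;> nlinarith

theorem isCopula2_of_forall_Ioo {G : ℝ × ℝ → ℝ} (hG : Continuous G)
    (hbounds : ∀ u ∈ Ioo (0 : ℝ) 1, ∀ v ∈ Ioo (0 : ℝ) 1,
      max 0 (u + v - 1) ≤ G (u, v) ∧ G (u, v) ≤ min u v)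
    (hrect : ∀ a₁ b₁ a₂ b₂ : ℝ, a₁ ∈ Ioo (0 : ℝ) 1 → b₁ ∈ Ioo (0 : ℝ) 1 →
      a₂ ∈ Ioo (0 : ℝ) 1 → b₂ ∈ Ioo (0 : ℝ) 1 → a₁ ≤ b₁ → a₂ ≤ b₂ →
        0 ≤ G (b₁, b₂) - G (a₁, b₂) - G (b₁, a₂) + G (a₁, a₂)) :
    IsCopula2 fun u v => G (u, v) := by
  have hboundsIcc : ∀ u ∈ Icc (0 : ℝ) 1, ∀ v ∈ Icc (0 : ℝ) 1,
      max 0 (u + v - 1) ≤ G (u, v) ∧ G (u, v) ≤ min u v := by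
    have hclosed : IsClosed {p : ℝ × ℝ | max 0 (p.1 + p.2 - 1) ≤ G p ∧ G p ≤ min p.1 p.2} :=
      (isClosed_le (by fun_prop) hG).inter (isClosed_le hG (by fun_prop))
    have hsub : closure (Ioo (0 : ℝ) 1 ×ˢ Ioo (0 : ℝ) 1) ⊆ _ :=
      hclosed.closure_subset_iff.2 fun p hp => hbounds _ hp.1 _ hp.2
    rw [closure_prod_eq, closure_Ioo zero_ne_one] at hsub
    exact fun u hu v hv => hsub (mk_mem_prod hu hv)
  refine ⟨fun u hu => ?_, fun a₁ b₁ a₂ b₂ ha₁ hb₁ ha₂ hb₂ h₁ h₂ => ?_⟩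
  · have h0 : (0 : ℝ) ∈ Icc 0 1 := left_mem_Icc.2 zero_le_one
    have h1 : (1 : ℝ) ∈ Icc 0 1 := right_mem_Icc.2 zero_le_one
    obtain ⟨hu0l, hu0r⟩ := hboundsIcc u hu 0 h0
    obtain ⟨h0ul, h0ur⟩ := hboundsIcc 0 h0 u hu
    obtain ⟨hu1l, hu1r⟩ := hboundsIcc u hu 1 h1
    obtain ⟨h1ul, h1ur⟩ := hboundsIcc 1 h1 u hu
    refine ⟨?_, ?_, ?_, ?_⟩
    · linarith [le_max_left 0 (u + 0 - 1), min_le_right u 0]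
    · linarith [le_max_left 0 (0 + u - 1), min_le_left 0 u]
    · linarith [le_max_right 0 (u + 1 - 1), min_le_left u 1]
    · linarith [le_max_right 0 (1 + u - 1), min_le_right 1 u]
  · have hlim : ∀ u v, Tendsto (fun t => G (t * u + (1 - t) / 2, t * v + (1 - t) / 2))
        (𝓝[<] 1) (𝓝 (G (u, v))) := fun u v =>
      (hG.tendsto _).comp ((tendsto_mul_add_one_sub_div_two u).prodMk_nhds
        (tendsto_mul_add_one_sub_div_two v))
    -- Shrinking towards `(1/2, 1/2)` moves the rectangle into `(0,1)²`, keeping it ordered.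
    refine ge_of_tendsto ((((hlim b₁ b₂).sub (hlim a₁ b₂)).sub (hlim b₁ a₂)).add (hlim a₁ a₂)) ?_
    filter_upwards [Ioo_mem_nhdsLT one_pos] with t ht
    have hsh := fun u (hu : u ∈ Icc (0 : ℝ) 1) => mul_add_one_sub_div_two_mem_Ioo ht hu
    exact hrect _ _ _ _ (hsh _ ha₁) (hsh _ hb₁) (hsh _ ha₂) (hsh _ hb₂)
      (by gcongr; exact ht.1.le) (by gcongr; exact ht.1.le)

theorem IsCopula2.eq_of_forall_Ioo {C C' : ℝ → ℝ → ℝ} (hC : IsCopula2 C) (hC' : IsCopula2 C')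
    (h : ∀ u ∈ Ioo (0 : ℝ) 1, ∀ v ∈ Ioo (0 : ℝ) 1, C u v = C' u v) :
    ∀ u ∈ Icc (0 : ℝ) 1, ∀ v ∈ Icc (0 : ℝ) 1, C u v = C' u v := by
  intro u hu v hv
  rcases hu.1.eq_or_lt with rfl | hu₀
  · rw [(hC.1 v hv).2.1, (hC'.1 v hv).2.1]
  rcases hu.2.eq_or_lt with rfl | hu₁
  · rw [(hC.1 v hv).2.2.2, (hC'.1 v hv).2.2.2]
  rcases hv.1.eq_or_lt with rfl | hv₀
  · rw [(hC.1 u hu).1, (hC'.1 u hu).1]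
  rcases hv.2.eq_or_lt with rfl | hv₁
  · rw [(hC.1 u hu).2.2.1, (hC'.1 u hu).2.2.1]
  exact h u ⟨hu₀, hu₁⟩ v ⟨hv₀, hv₁⟩

/-- Nelsen's definition of a bivariate distribution function with margins `F1`, `F2`, the values
at `±∞` being given as limits. -/
structure IsBivariateDistribution (H : ℝ → ℝ → ℝ) (F1 F2 : ℝ → ℝ) : Prop where
  twoIncreasing : ∀ a₁ b₁ a₂ b₂ : ℝ, a₁ ≤ b₁ → a₂ ≤ b₂ →
    0 ≤ H b₁ b₂ - H a₁ b₂ - H b₁ a₂ + H a₁ a₂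
  tendsto_atTop_right : ∀ x, Tendsto (fun y => H x y) atTop (𝓝 (F1 x))
  tendsto_atTop_left : ∀ y, Tendsto (fun x => H x y) atTop (𝓝 (F2 y))
  tendsto_atBot_left : ∀ y, Tendsto (fun x => H x y) atBot (𝓝 0)
  tendsto_atBot_right : ∀ x, Tendsto (fun y => H x y) atBot (𝓝 0)
  tendsto_diag : Tendsto (fun t : ℝ => H t t) atTop (𝓝 1)

namespace IsBivariateDistribution

variable {H : ℝ → ℝ → ℝ} {F1 F2 : ℝ → ℝ} (hH : IsBivariateDistribution H F1 F2)
include hH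

theorem flip : IsBivariateDistribution (flip H) F2 F1 where
  twoIncreasing a₁ b₁ a₂ b₂ h₁ h₂ := by
    have := hH.twoIncreasing a₂ b₂ a₁ b₁ h₂ h₁
    simp only [Function.flip_def]
    linarith
  tendsto_atTop_right := hH.tendsto_atTop_left
  tendsto_atTop_left := hH.tendsto_atTop_right
  tendsto_atBot_left := hH.tendsto_atBot_right
  tendsto_atBot_right := hH.tendsto_atBot_left
  tendsto_diag := hH.tendsto_diag

theorem monotone_sub {x x' : ℝ} (hx : x ≤ x') : Monotone fun y => H x' y - H x y :=
  fun y y' hy => by have := hH.twoIncreasing x x' y y' hx hy; linarith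

theorem monotone_left (y : ℝ) : Monotone (H · y) := fun x x' hx => by
  have := (hH.monotone_sub hx).le_of_tendsto
    ((hH.tendsto_atBot_right x').sub (hH.tendsto_atBot_right x)) y
  linarith

theorem monotone_right (x : ℝ) : Monotone (H x) :=
  hH.flip.monotone_left x

theorem sub_le_sub {x x' : ℝ} (hx : x ≤ x') (y : ℝ) : H x' y - H x y ≤ F1 x' - F1 x :=
  (hH.monotone_sub hx).ge_of_tendsto
    ((hH.tendsto_atTop_right x').sub (hH.tendsto_atTop_right x)) y

theorem monotone_marginal : Monotone F1 := fun x x' hx => by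
  have := hH.sub_le_sub hx 0
  have := hH.monotone_left 0 hx
  linarith

theorem abs_sub_le_abs_sub_marginal (x x' y : ℝ) : |H x y - H x' y| ≤ |F1 x - F1 x'| := by
  wlog hx : x' ≤ x generalizing x x'
  · rw [abs_sub_comm, abs_sub_comm (F1 x)]
    exact this x' x (le_of_not_ge hx)
  rw [abs_of_nonneg (sub_nonneg.2 (hH.monotone_left y hx)),
    abs_of_nonneg (sub_nonneg.2 (hH.monotone_marginal hx))]
  exact hH.sub_le_sub hx y

theorem dist_le_two_mul_dist (x x' y y' : ℝ) :
    dist (H x y) (H x' y') ≤ 2 * dist (F1 x, F2 y) (F1 x', F2 y') := by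
  have h₁ := hH.abs_sub_le_abs_sub_marginal x x' y
  have h₂ : |H x' y - H x' y'| ≤ |F2 y - F2 y'| := hH.flip.abs_sub_le_abs_sub_marginal y y' x'
  simp only [Real.dist_eq, Prod.dist_eq]
  calc |H x y - H x' y'| ≤ |H x y - H x' y| + |H x' y - H x' y'| := abs_sub_le _ _ _
    _ ≤ 2 * max |F1 x - F1 x'| |F2 y - F2 y'| := by
      linarith [le_max_left |F1 x - F1 x'| |F2 y - F2 y'|,
        le_max_right |F1 x - F1 x'| |F2 y - F2 y'|]

theorem nonneg (x y : ℝ) : 0 ≤ H x y :=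
  (hH.monotone_left y).le_of_tendsto (hH.tendsto_atBot_left y) x

theorem le_marginal (x y : ℝ) : H x y ≤ F1 x :=
  (hH.monotone_right x).ge_of_tendsto (hH.tendsto_atTop_right x) y

theorem le_one (x y : ℝ) : H x y ≤ 1 := by
  have hdiag : Monotone fun t => H t t := fun s t hst =>
    (hH.monotone_left s hst).trans (hH.monotone_right t hst)
  calc H x y ≤ H (max x y) (max x y) :=
        (hH.monotone_left y (le_max_left x y)).trans (hH.monotone_right _ (le_max_right x y))
    _ ≤ 1 := hdiag.ge_of_tendsto hH.tendsto_diag _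

theorem marginal_le_one (x : ℝ) : F1 x ≤ 1 :=
  le_of_tendsto' (hH.tendsto_atTop_right x) fun y => hH.le_one x y

theorem tendsto_marginal_atTop : Tendsto F1 atTop (𝓝 1) :=
  tendsto_of_tendsto_of_tendsto_of_le_of_le hH.tendsto_diag tendsto_const_nhds
    (fun t => hH.le_marginal t t) hH.marginal_le_one

theorem marginal_add_marginal_sub_one_le (x y : ℝ) : F1 x + F2 y - 1 ≤ H x y := by
  have := le_of_tendsto_of_tendsto ((hH.tendsto_atTop_right x).sub_const (H x y))
    (hH.flip.tendsto_marginal_atTop.sub_const (F2 y))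
    ((eventually_ge_atTop y).mono fun y' hy' => hH.flip.sub_le_sub hy' x)
  linarith

theorem max_le_and_le_min (x y : ℝ) :
    max 0 (F1 x + F2 y - 1) ≤ H x y ∧ H x y ≤ min (F1 x) (F2 y) :=
  ⟨max_le (hH.nonneg x y) (hH.marginal_add_marginal_sub_one_le x y),
    le_min (hH.le_marginal x y) (hH.flip.le_marginal y x)⟩

theorem exists_marginal_lt {u : ℝ} (hu : 0 < u) : ∃ x, F1 x < u := by
  obtain ⟨y, hy⟩ := (hH.flip.tendsto_marginal_atTop.eventually
    (lt_mem_nhds (by linarith : 1 - u / 2 < 1))).exists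
  obtain ⟨x, hx⟩ := ((hH.tendsto_atBot_left y).eventually
    (gt_mem_nhds (by linarith : 0 < u / 2))).exists
  exact ⟨x, by linarith [hH.marginal_add_marginal_sub_one_le x y]⟩

theorem Ioo_subset_range_marginal (hF : Continuous F1) : Ioo 0 1 ⊆ range F1 :=
  fun _ hu => mem_range_of_exists_le_of_exists_ge hF
    ((hH.exists_marginal_lt hu.1).imp fun _ => le_of_lt)
    ((hH.tendsto_marginal_atTop.eventually (lt_mem_nhds hu.2)).exists.imp fun _ => le_of_lt)

theorem exists_lipschitzWith_eq_comp :
    ∃ G : ℝ × ℝ → ℝ, LipschitzWith 2 G ∧ ∀ x y, H x y = G (F1 x, F2 y) := by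
  obtain ⟨G, hG, hHG⟩ := exists_lipschitzWith_comp_eq (K := 2) (Φ := Prod.map F1 F2)
    (f := fun p : ℝ × ℝ => H p.1 p.2) fun p q => by
      exact_mod_cast hH.dist_le_two_mul_dist p.1 q.1 p.2 q.2
  exact ⟨G, hG, fun x y => hHG (x, y)⟩

theorem isCopula2_of_eq_comp (hF1 : Continuous F1) (hF2 : Continuous F2) {G : ℝ × ℝ → ℝ}
    (hGc : Continuous G) (hG : ∀ x y, H x y = G (F1 x, F2 y)) :
    IsCopula2 fun u v => G (u, v) := by
  have hr1 := hH.Ioo_subset_range_marginal hF1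
  have hr2 := hH.flip.Ioo_subset_range_marginal hF2
  refine isCopula2_of_forall_Ioo hGc (fun u hu v hv => ?_)
    fun a₁ b₁ a₂ b₂ ha₁ hb₁ ha₂ hb₂ h₁ h₂ => ?_
  · obtain ⟨x, rfl⟩ := hr1 hu
    obtain ⟨y, rfl⟩ := hr2 hv
    rw [← hG]
    exact hH.max_le_and_le_min x y
  · obtain ⟨x, x', hx, rfl, rfl⟩ :=
      hH.monotone_marginal.exists_le_of_le_of_mem_range h₁ (hr1 ha₁) (hr1 hb₁)
    obtain ⟨y, y', hy, rfl, rfl⟩ :=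
      hH.flip.monotone_marginal.exists_le_of_le_of_mem_range h₂ (hr2 ha₂) (hr2 hb₂)
    simp only [← hG]
    exact hH.twoIncreasing x x' y y' hx hy

end IsBivariateDistribution

theorem sklar_bivariate_general (H : ℝ → ℝ → ℝ) (F1 F2 : ℝ → ℝ)
    (hincr : ∀ a₁ b₁ a₂ b₂ : ℝ, a₁ ≤ b₁ → a₂ ≤ b₂ →
      0 ≤ H b₁ b₂ - H a₁ b₂ - H b₁ a₂ + H a₁ a₂)
    (hF1 : ∀ x, Tendsto (fun y => H x y) atTop (nhds (F1 x)))
    (hF2 : ∀ y, Tendsto (fun x => H x y) atTop (nhds (F2 y)))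
    (hbot1 : ∀ y, Tendsto (fun x => H x y) atBot (nhds 0))
    (hbot2 : ∀ x, Tendsto (fun y => H x y) atBot (nhds 0))
    (htop : Tendsto (fun t : ℝ => H t t) atTop (nhds 1))
    (hF1cont : Continuous F1) (hF2cont : Continuous F2) :
    ∃ C : ℝ → ℝ → ℝ, IsCopula2 C ∧ (∀ x y, H x y = C (F1 x) (F2 y)) ∧
      ∀ C' : ℝ → ℝ → ℝ, IsCopula2 C' → (∀ x y, H x y = C' (F1 x) (F2 y)) →
        ∀ u ∈ Set.Icc (0:ℝ) 1, ∀ v ∈ Set.Icc (0:ℝ) 1, C' u v = C u v := by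
  have hH : IsBivariateDistribution H F1 F2 := ⟨hincr, hF1, hF2, hbot1, hbot2, htop⟩
  obtain ⟨G, hGlip, hG⟩ := hH.exists_lipschitzWith_eq_comp
  have hC := hH.isCopula2_of_eq_comp hF1cont hF2cont hGlip.continuous hG
  refine ⟨fun u v => G (u, v), hC, hG, fun C' hC' hC'H => hC'.eq_of_forall_Ioo hC ?_⟩
  intro u hu v hv
  obtain ⟨x, rfl⟩ := hH.Ioo_subset_range_marginal hF1cont hu
  obtain ⟨y, rfl⟩ := hH.flip.Ioo_subset_range_marginal hF2cont hv
  rw [← hC'H, hG]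

/-- Sklar's theorem, bivariate case: if `H` is a bivariate distribution
function (2-increasing, right-continuous, with the appropriate limits) whose marginals
`F₁(x) = lim_{y→∞} H(x,y)` and `F₂(y) = lim_{x→∞} H(x,y)` are continuous, then there is a
copula `C`, unique on `[0,1]²`, with `H(x,y) = C(F₁(x), F₂(y))` for all `x, y`. -/
theorem sklar_bivariate (H : ℝ → ℝ → ℝ) (F1 F2 : ℝ → ℝ)
    (hincr : ∀ a₁ b₁ a₂ b₂ : ℝ, a₁ ≤ b₁ → a₂ ≤ b₂ →
      0 ≤ H b₁ b₂ - H a₁ b₂ - H b₁ a₂ + H a₁ a₂)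
    (hrc : ∀ p : ℝ × ℝ, ContinuousWithinAt (fun q : ℝ × ℝ => H q.1 q.2)
      (Set.Ici p) p)
    (hF1 : ∀ x, Tendsto (fun y => H x y) atTop (nhds (F1 x)))
    (hF2 : ∀ y, Tendsto (fun x => H x y) atTop (nhds (F2 y)))
    (hbot1 : ∀ y, Tendsto (fun x => H x y) atBot (nhds 0))
    (hbot2 : ∀ x, Tendsto (fun y => H x y) atBot (nhds 0))
    (htop : Tendsto (fun t : ℝ => H t t) atTop (nhds 1))
    (hF1cont : Continuous F1) (hF2cont : Continuous F2) :
    ∃ C : ℝ → ℝ → ℝ, IsCopula2 C ∧ (∀ x y, H x y = C (F1 x) (F2 y)) ∧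
      ∀ C' : ℝ → ℝ → ℝ, IsCopula2 C' → (∀ x y, H x y = C' (F1 x) (F2 y)) →
        ∀ u ∈ Set.Icc (0:ℝ) 1, ∀ v ∈ Set.Icc (0:ℝ) 1, C' u v = C u v :=
  sklar_bivariate_general H F1 F2 hincr hF1 hF2 hbot1 hbot2 htop hF1cont hF2cont
end

section
/- The Wehrly–Johnson construction yields a valid bivariate density: if f₁, f₂ are probability densities on [0, 2π) with cdfs F₁, F₂, and g is a probability density on [0, 2π) extended periodically with period 2π, then f(θ₁,θ₂) = 2π · g(2π(F₁(θ₁) - F₂(θ₂))) f₁(θ₁) f₂(θ₂) integrates to 1 over [0,2π)², and its marginal densities are f₁ and f₂. -/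
/-!
Because `F` is a continuous cdf of the density `f` on `[a, b]`, it pushes the measure `f(θ) dθ`
on `(a, b]` forward to Lebesgue measure on `(0, 1]` (probability integral transform); hence
`∫ G(F θ) f(θ) dθ = ∫₀¹ G(u) du` for every measurable `G`. With `G(u) = 2π g(2π(F₁ θ₁ - u))` the
inner integral becomes an integral of `g` over a full period, which is `1` by periodicity; this
gives the marginals, and integrating the first marginal gives total mass `1`.
-/

open Real MeasureTheory intervalIntegral Set

theorem MonotoneOn.exists_preimage_Iic_inter_Ioc {F : ℝ → ℝ} {a b t : ℝ} (hab : a ≤ b)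
    (hmono : MonotoneOn F (Icc a b)) (hFc : ContinuousOn F (Icc a b)) (ht : F a ≤ t) :
    ∃ s ∈ Icc a b, F s = min t (F b) ∧ F ⁻¹' Iic t ∩ Ioc a b = Ioc a s := by
  set S := Icc a b ∩ F ⁻¹' Iic t
  have hSbdd : BddAbove S := ⟨b, fun x hx => hx.1.2⟩
  have hs : sSup S ∈ S :=
    (hFc.preimage_isClosed_of_isClosed isClosed_Icc isClosed_Iic).csSup_mem
      ⟨a, ⟨le_rfl, hab⟩, ht⟩ hSbdd
  obtain ⟨θ, hθ, hFθ⟩ : ∃ θ ∈ Icc a b, F θ = min t (F b) :=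
    intermediate_value_Icc hab hFc ⟨le_min ht (hmono ⟨le_rfl, hab⟩ ⟨hab, le_rfl⟩ hab),
      min_le_right _ _⟩
  have hθS : θ ∈ S := ⟨hθ, (hFθ.trans_le (min_le_left _ _) :)⟩
  refine ⟨sSup S, hs.1, le_antisymm (le_min hs.2 (hmono hs.1 ⟨hab, le_rfl⟩ hs.1.2)) ?_, ?_⟩
  · exact hFθ ▸ hmono hθ hs.1 (le_csSup hSbdd hθS)
  ext x
  simp only [mem_inter_iff, mem_preimage, mem_Iic, mem_Ioc]
  constructor
  · rintro ⟨hFx, hax, hxb⟩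
    exact ⟨hax, le_csSup hSbdd ⟨⟨hax.le, hxb⟩, hFx⟩⟩
  · rintro ⟨hax, hxs⟩
    have hx : x ∈ Icc a b := ⟨hax.le, hxs.trans hs.1.2⟩
    exact ⟨(hmono hx hs.1 hxs).trans hs.2, hax, hx.2⟩

theorem MeasureTheory.Measure.map_eq_restrict_Ioc_of_cdf {ν : Measure ℝ} {F : ℝ → ℝ}
    {a b : ℝ} (hab : a ≤ b) (hmono : MonotoneOn F (Icc a b)) (hFc : Continuous F)
    (hν : ν (Ioc a b)ᶜ = 0) (hνF : ∀ x ∈ Icc a b, ν (Ioc a x) = ENNReal.ofReal (F x - F a)) :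
    ν.map F = volume.restrict (Ioc (F a) (F b)) := by
  have hνuniv : ν univ = ENNReal.ofReal (F b - F a) := by
    rw [← hνF b ⟨hab, le_rfl⟩, ← univ_inter (Ioc a b), measure_inter_conull hν]
  have : IsFiniteMeasure ν := ⟨by simp [hνuniv]⟩
  refine Measure.ext_of_Iic _ _ fun t => ?_
  rw [Measure.map_apply hFc.measurable measurableSet_Iic, ← measure_inter_conull hν,
    Measure.restrict_apply measurableSet_Iic, inter_comm (Iic t), Ioc_inter_Iic, Real.volume_Ioc]
  rcases lt_or_ge t (F a) with ht | ht
  · have hempty : F ⁻¹' Iic t ∩ Ioc a b = ∅ :=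
      eq_empty_of_forall_notMem fun x ⟨hFx, hx⟩ =>
        (hFx.trans_lt ht).not_ge (hmono ⟨le_rfl, hab⟩ (Ioc_subset_Icc_self hx) hx.1.le)
    rw [hempty, measure_empty, ENNReal.ofReal_of_nonpos]
    linarith [min_le_right (F b) t]
  · obtain ⟨s, hs, hFs, hpre⟩ := hmono.exists_preimage_Iic_inter_Ioc hab hFc.continuousOn ht
    rw [hpre, hνF s hs, hFs, min_comm]

theorem monotoneOn_of_eq_add_integral {f F : ℝ → ℝ} {a b : ℝ} (hf : ∀ x, 0 ≤ f x)
    (hfi : IntervalIntegrable f volume a b) (hF : ∀ x ∈ Icc a b, F x = F a + ∫ t in a..x, f t) :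
    MonotoneOn F (Icc a b) := by
  intro x hx y hy hxy
  have hint : ∀ {u v}, u ∈ Icc a b → v ∈ Icc a b → IntervalIntegrable f volume u v :=
    fun hu hv => hfi.mono_set (by rw [uIcc_of_le (hx.1.trans hx.2)]; exact uIcc_subset_Icc hu hv)
  have := integral_add_adjacent_intervals (hint ⟨le_rfl, hx.1.trans hx.2⟩ hx) (hint hx hy)
  rw [hF x hx, hF y hy, ← this]
  linarith [integral_nonneg (μ := volume) hxy fun t _ => hf t]

theorem intervalIntegral.integral_comp_mul_of_eq_add_integral {f F G : ℝ → ℝ} {a b : ℝ}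
    (hab : a ≤ b) (hfm : Measurable f) (hf : ∀ x, 0 ≤ f x)
    (hfi : IntervalIntegrable f volume a b) (hF : ∀ x ∈ Icc a b, F x = F a + ∫ t in a..x, f t)
    (hFc : Continuous F) (hGm : Measurable G) :
    ∫ x in a..b, G (F x) * f x = ∫ u in F a..F b, G u := by
  set ν := (volume.restrict (Ioc a b)).withDensity fun x => ENNReal.ofReal (f x)
  have hmono := monotoneOn_of_eq_add_integral hf hfi hF
  have hν : ν (Ioc a b)ᶜ = 0 := withDensity_absolutelyContinuous _ _ <| by
    rw [Measure.restrict_apply measurableSet_Ioc.compl, compl_inter_self, measure_empty]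
  have hνF : ∀ x ∈ Icc a b, ν (Ioc a x) = ENNReal.ofReal (F x - F a) := by
    intro x hx
    have hsub : Ioc a x ⊆ Ioc a b := Ioc_subset_Ioc_right hx.2
    rw [withDensity_apply _ measurableSet_Ioc, Measure.restrict_restrict measurableSet_Ioc,
      inter_eq_left.mpr hsub, ← ofReal_integral_eq_lintegral_ofReal
        (hfi.1.mono_set hsub) (.of_forall hf), hF x hx, add_sub_cancel_left,
      integral_of_le hx.1]
  calc ∫ x in a..b, G (F x) * f x
      = ∫ x, G (F x) ∂ν := by
        rw [integral_of_le hab, integral_withDensity_eq_integral_toReal_smul hfm.ennreal_ofReal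
          (.of_forall fun _ => ENNReal.ofReal_lt_top) fun x => G (F x)]
        congr 1 with x
        rw [ENNReal.toReal_ofReal (hf x), smul_eq_mul, mul_comm]
    _ = ∫ u, G u ∂ν.map F := (integral_map hFc.aemeasurable hGm.aestronglyMeasurable).symm
    _ = ∫ u in F a..F b, G u := by
        rw [Measure.map_eq_restrict_Ioc_of_cdf hab hmono hFc hν hνF,
          integral_of_le (hmono ⟨le_rfl, hab⟩ ⟨hab, le_rfl⟩ hab)]

theorem intervalIntegral.integral_comp_cdf_mul {f F G : ℝ → ℝ} {a b : ℝ} (hab : a ≤ b)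
    (hfm : Measurable f) (hf : ∀ x, 0 ≤ f x) (hfint : ∫ x in a..b, f x = 1)
    (hF : ∀ x, F x = ∫ t in a..x, f t) (hFc : Continuous F) (hGm : Measurable G) :
    ∫ x in a..b, G (F x) * f x = ∫ u in 0..1, G u := by
  have hfi : IntervalIntegrable f volume a b :=
    intervalIntegrable_of_integral_ne_zero (hfint ▸ one_ne_zero)
  rw [integral_comp_mul_of_eq_add_integral hab hfm hf hfi
    (fun x _ => by rw [hF x, hF a, integral_same, zero_add]) hFc hGm, hF a, hF b, integral_same,
    hfint]

theorem Function.Periodic.intervalIntegral_mul_comp_mul {g : ℝ → ℝ} {T : ℝ}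
    (hg : Function.Periodic g T) (hT : T ≠ 0) {a b : ℝ} (hab : b = a + 1) :
    ∫ u in a..b, T * g (T * u) = ∫ x in 0..T, g x := by
  rw [intervalIntegral.integral_const_mul, integral_comp_mul_left g hT, hab, mul_add, mul_one,
    hg.intervalIntegral_add_eq (T * a) 0, zero_add, smul_eq_mul, mul_inv_cancel_left₀ hT]

theorem wehrly_johnson_general (f1 f2 g F1 F2 : ℝ → ℝ)
    (hf1m : Measurable f1) (hf2m : Measurable f2) (hgm : Measurable g)
    (hf1 : ∀ x, 0 ≤ f1 x) (hf2 : ∀ x, 0 ≤ f2 x)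
    (hf1int : (∫ x in (0:ℝ)..(2 * π), f1 x) = 1)
    (hf2int : (∫ x in (0:ℝ)..(2 * π), f2 x) = 1)
    (hgint : (∫ x in (0:ℝ)..(2 * π), g x) = 1)
    (hgper : Function.Periodic g (2 * π))
    (hF1 : ∀ θ, F1 θ = ∫ t in (0:ℝ)..θ, f1 t)
    (hF2 : ∀ θ, F2 θ = ∫ t in (0:ℝ)..θ, f2 t)
    (hF1c : Continuous F1) (hF2c : Continuous F2) :
    (∫ θ1 in (0:ℝ)..(2 * π), ∫ θ2 in (0:ℝ)..(2 * π),
        2 * π * g (2 * π * (F1 θ1 - F2 θ2)) * f1 θ1 * f2 θ2) = 1 ∧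
    (∀ θ1 ∈ Set.Ico (0:ℝ) (2 * π),
      (∫ θ2 in (0:ℝ)..(2 * π),
        2 * π * g (2 * π * (F1 θ1 - F2 θ2)) * f1 θ1 * f2 θ2) = f1 θ1) ∧
    (∀ θ2 ∈ Set.Ico (0:ℝ) (2 * π),
      (∫ θ1 in (0:ℝ)..(2 * π),
        2 * π * g (2 * π * (F1 θ1 - F2 θ2)) * f1 θ1 * f2 θ2) = f2 θ2) := by
  have h2π : 0 ≤ 2 * π := by positivity
  have hT : 2 * π ≠ 0 := by positivity
  have marginal₁ (θ1 : ℝ) : ∫ θ2 in (0:ℝ)..(2 * π),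
      2 * π * g (2 * π * (F1 θ1 - F2 θ2)) * f1 θ1 * f2 θ2 = f1 θ1 := by
    calc _ = f1 θ1 * ∫ θ2 in (0:ℝ)..(2 * π),
          2 * π * g (2 * π * (F1 θ1 - F2 θ2)) * f2 θ2 := by
          rw [← intervalIntegral.integral_const_mul]
          congr 1 with θ2
          ring
      _ = f1 θ1 := by
          rw [integral_comp_cdf_mul (G := fun u => 2 * π * g (2 * π * (F1 θ1 - u))) h2π
              hf2m hf2 hf2int hF2 hF2c (by fun_prop),
            integral_comp_sub_left (fun v => 2 * π * g (2 * π * v)),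
            hgper.intervalIntegral_mul_comp_mul hT (by ring), hgint, mul_one]
  have marginal₂ (θ2 : ℝ) : ∫ θ1 in (0:ℝ)..(2 * π),
      2 * π * g (2 * π * (F1 θ1 - F2 θ2)) * f1 θ1 * f2 θ2 = f2 θ2 := by
    calc _ = f2 θ2 * ∫ θ1 in (0:ℝ)..(2 * π),
          2 * π * g (2 * π * (F1 θ1 - F2 θ2)) * f1 θ1 := by
          rw [← intervalIntegral.integral_const_mul]
          congr 1 with θ1
          ring
      _ = f2 θ2 := by
          rw [integral_comp_cdf_mul (G := fun u => 2 * π * g (2 * π * (u - F2 θ2))) h2π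
              hf1m hf1 hf1int hF1 hF1c (by fun_prop),
            integral_comp_sub_right (fun v => 2 * π * g (2 * π * v)),
            hgper.intervalIntegral_mul_comp_mul hT (by ring), hgint, mul_one]
  exact ⟨by rw [integral_congr fun θ1 _ => marginal₁ θ1, hf1int], fun θ1 _ => marginal₁ θ1,
    fun θ2 _ => marginal₂ θ2⟩

/-- Wehrly–Johnson construction: if `f₁, f₂` are probability densities on
`[0, 2π)` with cdfs `F₁, F₂` (assumed continuous), and `g` is a `2π`-periodic probability
density, then `f(θ₁,θ₂) = 2π·g(2π(F₁(θ₁) - F₂(θ₂)))·f₁(θ₁)·f₂(θ₂)` integrates to `1`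
over `[0,2π)²` and has marginal densities `f₁` and `f₂`. -/
theorem wehrly_johnson (f1 f2 g F1 F2 : ℝ → ℝ)
    (hf1m : Measurable f1) (hf2m : Measurable f2) (hgm : Measurable g)
    (hf1 : ∀ x, 0 ≤ f1 x) (hf2 : ∀ x, 0 ≤ f2 x) (hg : ∀ x, 0 ≤ g x)
    (hf1int : (∫ x in (0:ℝ)..(2 * π), f1 x) = 1)
    (hf2int : (∫ x in (0:ℝ)..(2 * π), f2 x) = 1)
    (hgint : (∫ x in (0:ℝ)..(2 * π), g x) = 1)
    (hgper : Function.Periodic g (2 * π))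
    (hF1 : ∀ θ, F1 θ = ∫ t in (0:ℝ)..θ, f1 t)
    (hF2 : ∀ θ, F2 θ = ∫ t in (0:ℝ)..θ, f2 t)
    (hF1c : Continuous F1) (hF2c : Continuous F2) :
    (∫ θ1 in (0:ℝ)..(2 * π), ∫ θ2 in (0:ℝ)..(2 * π),
        2 * π * g (2 * π * (F1 θ1 - F2 θ2)) * f1 θ1 * f2 θ2) = 1 ∧
    (∀ θ1 ∈ Set.Ico (0:ℝ) (2 * π),
      (∫ θ2 in (0:ℝ)..(2 * π),
        2 * π * g (2 * π * (F1 θ1 - F2 θ2)) * f1 θ1 * f2 θ2) = f1 θ1) ∧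
    (∀ θ2 ∈ Set.Ico (0:ℝ) (2 * π),
      (∫ θ1 in (0:ℝ)..(2 * π),
        2 * π * g (2 * π * (F1 θ1 - F2 θ2)) * f1 θ1 * f2 θ2) = f2 θ2) :=
  wehrly_johnson_general f1 f2 g F1 F2 hf1m hf2m hgm hf1 hf2 hf1int hf2int hgint hgper hF1 hF2 hF1c
    hF2c
end

section
/- For the t copula with ν degrees of freedom and correlation matrix R, as ν → ∞ the copula converges pointwise to the Gaussian copula with the same correlation matrix: lim_{ν→∞} T_m(T⁻¹(u₁|ν),…,T⁻¹(u_m|ν) | ν, R) = Φ_m(Φ⁻¹(u₁),…,Φ⁻¹(u_m) | R) for all (u₁,…,u_m) ∈ (0,1)^m. -/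
/-!
Both copulas are integrals over orthants `Iic x`. The Student normalising constant tends to the
Gaussian one because log-convexity of `Gamma` gives `Gamma (x + a) ~ Gamma x * x ^ a`. The
kernel `(1 + q / ν) ^ (-(ν + m) / 2)` tends to `exp (-q / 2)`, and since `ν * log (1 + q / ν)`
increases with `ν` it is dominated, for `ν ≥ m + 1`, by its value at `ν = m + 1`, which is
integrable because `q` grows quadratically. This dominated convergence gives `T(·|ν) → Φ`
pointwise; as `Φ` is strictly increasing, the `t` quantiles converge to the normal ones, so the
orthants `Iic (T⁻¹(u|ν))` converge to `Iic (Φ⁻¹(u))` off a null union of hyperplanes, and the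
same dominated convergence applies in dimension `m`.
-/

open Real MeasureTheory Filter Topology Matrix

/-- The quadratic form `xᵀ R⁻¹ x`. -/
noncomputable def quadForm (m : ℕ) (R : Matrix (Fin m) (Fin m) ℝ) (x : Fin m → ℝ) : ℝ :=
  ∑ i, ∑ j, R⁻¹ i j * x i * x j

/-- Density of the `m`-variate Student `t` distribution with `ν` degrees of freedom,
location `0` and scale (correlation) matrix `R`. -/
noncomputable def mvtPDF (m : ℕ) (ν : ℝ) (R : Matrix (Fin m) (Fin m) ℝ)
    (x : Fin m → ℝ) : ℝ :=
  Real.Gamma ((ν + m) / 2) /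
      (Real.Gamma (ν / 2) * (ν * π) ^ ((m : ℝ) / 2) * Real.sqrt R.det) *
    (1 + quadForm m R x / ν) ^ (-(ν + m) / 2)

/-- Cdf `T_m(·|ν,R)` of the `m`-variate Student `t` distribution. -/
noncomputable def mvtCDF (m : ℕ) (ν : ℝ) (R : Matrix (Fin m) (Fin m) ℝ)
    (x : Fin m → ℝ) : ℝ :=
  ∫ y in Set.Iic x, mvtPDF m ν R y

/-- Density of the centered `m`-variate Gaussian with correlation matrix `R`. -/
noncomputable def mvNormPDF (m : ℕ) (R : Matrix (Fin m) (Fin m) ℝ)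
    (x : Fin m → ℝ) : ℝ :=
  ((2 * π) ^ ((m : ℝ) / 2) * Real.sqrt R.det)⁻¹ * Real.exp (-(quadForm m R x) / 2)

/-- Cdf `Φ_m(·|R)` of the centered `m`-variate Gaussian with correlation matrix `R`. -/
noncomputable def mvNormCDF (m : ℕ) (R : Matrix (Fin m) (Fin m) ℝ)
    (x : Fin m → ℝ) : ℝ :=
  ∫ y in Set.Iic x, mvNormPDF m R y

/-- Cdf `T(·|ν)` of the univariate Student `t` distribution with `ν` degrees of
freedom. -/
noncomputable def tCDF (ν x : ℝ) : ℝ :=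
  ∫ t in Set.Iic x,
    Real.Gamma ((ν + 1) / 2) / (Real.Gamma (ν / 2) * Real.sqrt (ν * π)) *
      (1 + t ^ 2 / ν) ^ (-(ν + 1) / 2)

/-- The standard normal cdf `Φ`. -/
noncomputable def stdNormCDF (x : ℝ) : ℝ :=
  ∫ t in Set.Iic x, (Real.sqrt (2 * π))⁻¹ * Real.exp (-t ^ 2 / 2)

open Set

lemma log_Gamma_add_one_sub_log_Gamma {x : ℝ} (hx : 0 < x) :
    log (Gamma (x + 1)) - log (Gamma x) = log x := by
  rw [Gamma_add_one hx.ne', log_mul hx.ne' (Gamma_pos_of_pos hx).ne', add_sub_cancel_right]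

lemma log_Gamma_add_sub_log_Gamma_mem_Icc {x a : ℝ} (hx : 1 < x) (ha : 0 < a) :
    log (Gamma (x + a)) - log (Gamma x) ∈ Icc (a * log (x - 1)) (a * log (x + a)) := by
  have hconv := convexOn_log_Gamma
  have mem : ∀ {y : ℝ}, 0 < y → y ∈ Ioi (0 : ℝ) := id
  have hlower := hconv.slope_mono_adjacent (mem (by linarith : (0:ℝ) < x - 1))
    (mem (by linarith : (0:ℝ) < x + a)) (sub_one_lt x) (lt_add_of_pos_right x ha)
  have hupper := hconv.slope_mono_adjacent (mem (by linarith : (0:ℝ) < x))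
    (mem (by linarith : (0:ℝ) < x + a + 1)) (lt_add_of_pos_right x ha) (lt_add_one (x + a))
  simp only [Function.comp_apply, sub_sub_cancel, add_sub_cancel_left, div_one]
    at hlower hupper
  rw [log_Gamma_add_one_sub_log_Gamma (by linarith : 0 < x + a)] at hupper
  have hstep := log_Gamma_add_one_sub_log_Gamma (by linarith : 0 < x - 1)
  rw [sub_add_cancel] at hstep
  rw [hstep] at hlower
  rw [le_div_iff₀ ha] at hlower
  rw [div_le_iff₀ ha] at hupper
  constructor <;> linarith

lemma tendsto_log_Gamma_add_sub_log_Gamma {a : ℝ} (ha : 0 ≤ a) :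
    Tendsto (fun x => log (Gamma (x + a)) - log (Gamma x) - a * log x) atTop (𝓝 0) := by
  rcases ha.eq_or_lt with rfl | ha
  · simp
  have hlim : ∀ b : ℝ, Tendsto (fun x => a * (log (x + b) - log x)) atTop (𝓝 0) := fun b => by
    simpa using (tendsto_log_comp_add_sub_log b).const_mul a
  refine tendsto_of_tendsto_of_tendsto_of_le_of_le' (hlim (-1)) (hlim a) ?_ ?_ <;>
  · filter_upwards [eventually_gt_atTop 1] with x hx
    have := log_Gamma_add_sub_log_Gamma_mem_Icc hx ha
    simp only [← sub_eq_add_neg, mul_sub] at this ⊢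
    linarith [this.1, this.2]

lemma tendsto_Gamma_add_div_Gamma_mul_rpow {a : ℝ} (ha : 0 ≤ a) :
    Tendsto (fun x => Gamma (x + a) / (Gamma x * x ^ a)) atTop (𝓝 1) := by
  have := (continuous_exp.tendsto 0).comp (tendsto_log_Gamma_add_sub_log_Gamma ha)
  rw [exp_zero] at this
  refine this.congr' ?_
  filter_upwards [eventually_gt_atTop 0] with x hx
  have h1 := Gamma_pos_of_pos hx
  have h2 := Gamma_pos_of_pos (by linarith : 0 < x + a)
  rw [Function.comp_apply, exp_sub, exp_sub, exp_log h2, exp_log h1, ← log_rpow hx,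
    exp_log (by positivity), div_div]

lemma tendsto_Gamma_half_add_div_Gamma_half_mul_rpow (k : ℝ) (hk : 0 ≤ k) :
    Tendsto (fun ν => Gamma ((ν + k) / 2) / (Gamma (ν / 2) * (ν * π) ^ (k / 2))) atTop
      (𝓝 ((2 * π) ^ (k / 2))⁻¹) := by
  have h := ((tendsto_Gamma_add_div_Gamma_mul_rpow (by positivity : 0 ≤ k / 2)).comp
    (tendsto_id.atTop_div_const two_pos)).mul_const ((2 * π) ^ (k / 2))⁻¹
  rw [one_mul] at h
  refine h.congr' ?_
  filter_upwards [eventually_gt_atTop 0] with ν hν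
  have hsplit : (ν * π) ^ (k / 2) = (ν / 2) ^ (k / 2) * (2 * π) ^ (k / 2) := by
    rw [← mul_rpow (by positivity) (by positivity)]
    ring_nf
  have := Gamma_pos_of_pos (half_pos hν)
  rw [Function.comp_apply, id, add_div, hsplit]
  field_simp

/-- `log (1 + s) / s` decreases in `s` by concavity of `log`; put `s = q / x`. -/
lemma mul_log_one_add_div_le {q x y : ℝ} (hq : 0 ≤ q) (hx : 0 < x) (hxy : x ≤ y) :
    x * log (1 + q / x) ≤ y * log (1 + q / y) := by
  rcases hq.eq_or_lt with rfl | hq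
  · simp
  have hy : 0 < y := hx.trans_le hxy
  have mem : ∀ {z : ℝ}, 0 < z → z ∈ Ioi (0 : ℝ) := id
  have h := strictConcaveOn_log_Ioi.concaveOn.neg.secant_mono (a := 1)
    (mem one_pos) (mem (by positivity : 0 < 1 + q / y)) (mem (by positivity : 0 < 1 + q / x))
    (by simp [hq.ne', hy.ne']) (by simp [hq.ne', hx.ne'])
    (by gcongr)
  simp only [Pi.neg_apply, log_one, neg_zero, sub_zero, add_sub_cancel_left, div_div_eq_mul_div,
    neg_mul, neg_div, neg_le_neg_iff] at h
  rw [div_le_div_iff_of_pos_right hq] at h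
  linarith

lemma one_add_div_rpow_le {q ν₀ ν k : ℝ} (hq : 0 ≤ q) (hν₀ : 0 < ν₀) (hν : ν₀ ≤ ν)
    (hk : 0 ≤ k) : (1 + q / ν) ^ (-(ν + k) / 2) ≤ (1 + q / ν₀) ^ (-(ν₀ / 2)) := by
  have hpos : ∀ {x : ℝ}, 0 < x → 0 < 1 + q / x := fun hx => by positivity
  rw [rpow_def_of_pos (hpos (hν₀.trans_le hν)), rpow_def_of_pos (hpos hν₀), exp_le_exp]
  have := mul_log_one_add_div_le hq hν₀ hν
  have : 0 ≤ log (1 + q / ν) :=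
    log_nonneg (le_add_of_nonneg_right (div_nonneg hq (hν₀.le.trans hν)))
  nlinarith

lemma tendsto_one_add_div_rpow (q k : ℝ) :
    Tendsto (fun ν => (1 + q / ν) ^ (-(ν + k) / 2)) atTop (𝓝 (exp (-q / 2))) := by
  have hbase : Tendsto (fun ν => 1 + q / ν) atTop (𝓝 1) := by
    simpa using (tendsto_const_nhds (x := (1 : ℝ))).add
      ((tendsto_const_nhds (x := q)).div_atTop tendsto_id)
  have hlog : Tendsto (fun ν => log (1 + q / ν)) atTop (𝓝 0) := by
    simpa [Function.comp_def] using ((continuousAt_log one_ne_zero).tendsto).comp hbase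
  have hexp : Tendsto (fun ν => -(ν + k) / 2 * log (1 + q / ν)) atTop (𝓝 (-q / 2)) := by
    have := ((tendsto_mul_log_one_add_div_atTop q).const_mul (-1 / 2)).add
      (hlog.const_mul (-k / 2))
    rw [mul_zero, add_zero, show -1 / 2 * q = -q / 2 by ring] at this
    exact this.congr fun ν => by ring
  refine ((continuous_exp.tendsto _).comp hexp).congr' ?_
  filter_upwards [hbase.eventually (eventually_gt_nhds one_pos)] with ν hν
  rw [Function.comp_apply, rpow_def_of_pos hν, mul_comm]

section StudentKernel

variable {E : Type*} [NormedAddCommGroup E] [NormedSpace ℝ E] [FiniteDimensional ℝ E]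
  [MeasurableSpace E] [BorelSpace E] (μ : Measure E) [μ.IsAddHaarMeasure]
  {q : E → ℝ} {c : ℝ}

lemma integrable_one_add_div_rpow_neg (hq : Measurable q) (hc : 0 < c)
    (hqc : ∀ y, c * ‖y‖ ^ 2 ≤ q y) {a e : ℝ} (ha : 0 < a)
    (he : (Module.finrank ℝ E : ℝ) < 2 * e) :
    Integrable (fun y => (1 + q y / a) ^ (-e)) μ := by
  have he0 : 0 < e := by linarith [(Module.finrank ℝ E).cast_nonneg (α := ℝ)]
  set ε := min 1 (c / a)
  have hε : 0 < ε := lt_min one_pos (by positivity)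
  have hbound : ∀ y, ε * (1 + ‖y‖ ^ 2) ≤ 1 + q y / a := fun y => by
    have h1 : ε ≤ 1 := min_le_left _ _
    have h2 : ε * ‖y‖ ^ 2 ≤ q y / a :=
      calc ε * ‖y‖ ^ 2 ≤ c / a * ‖y‖ ^ 2 := by gcongr; exact min_le_right _ _
        _ ≤ q y / a := by rw [div_mul_eq_mul_div]; gcongr; exact hqc y
    linarith
  refine ((integrable_rpow_neg_one_add_norm_sq (μ := μ) (r := 2 * e) he).const_mul
    (ε ^ (-e))).mono'
    ((measurable_const.add (hq.div_const a)).pow_const _).aestronglyMeasurable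
    (ae_of_all _ fun y => ?_)
  have hpos : 0 < ε * (1 + ‖y‖ ^ 2) := by positivity
  rw [norm_of_nonneg ((rpow_pos_of_pos (hpos.trans_le (hbound y)) _).le),
    show -(2 * e) / 2 = -e by ring, ← mul_rpow hε.le (by positivity)]
  exact rpow_le_rpow_of_nonpos hpos (hbound y) (neg_nonpos.mpr he0.le)

theorem tendsto_setIntegral_mul_one_add_div_rpow (hq : Measurable q) (hc : 0 < c)
    (hqc : ∀ y, c * ‖y‖ ^ 2 ≤ q y) {C : ℝ → ℝ} {C₀ : ℝ} (hC : Tendsto C atTop (𝓝 C₀))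
    {k : ℝ} (hk : 0 ≤ k) {s : ℝ → Set E} {t : Set E} (hs : ∀ ν, MeasurableSet (s ν))
    (ht : MeasurableSet t) (hst : ∀ᵐ y ∂μ, ∀ᶠ ν in atTop, (y ∈ s ν ↔ y ∈ t)) :
    Tendsto (fun ν => ∫ y in s ν, C ν * (1 + q y / ν) ^ (-(ν + k) / 2) ∂μ) atTop
      (𝓝 (∫ y in t, C₀ * exp (-q y / 2) ∂μ)) := by
  set ν₀ : ℝ := Module.finrank ℝ E + 1
  have hν₀ : 0 < ν₀ := by positivity
  have hq0 : ∀ y, 0 ≤ q y := fun y => (mul_nonneg hc.le (sq_nonneg _)).trans (hqc y)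
  have hCbdd : ∀ᶠ ν in atTop, |C ν| ≤ |C₀| + 1 :=
    ((continuous_abs.tendsto _).comp hC).eventually (eventually_le_nhds (lt_add_one _))
  rw [← integral_indicator ht]
  refine Tendsto.congr (fun ν => integral_indicator (hs ν)) ?_
  refine tendsto_integral_filter_of_dominated_convergence
    (fun y => (|C₀| + 1) * (1 + q y / ν₀) ^ (-(ν₀ / 2))) (Eventually.of_forall fun ν =>
      ((measurable_const.mul ((measurable_const.add (hq.div_const ν)).pow_const _)).indicator
        (hs ν)).aestronglyMeasurable) ?_ ?_ ?_
  · filter_upwards [eventually_ge_atTop ν₀, hCbdd] with ν hν hCν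
    refine ae_of_all _ fun y => (norm_indicator_le_norm_self _ _).trans ?_
    have hbase : 0 ≤ 1 + q y / ν := by have := div_nonneg (hq0 y) (hν₀.trans_le hν).le; linarith
    rw [norm_mul, norm_of_nonneg (rpow_nonneg hbase _), Real.norm_eq_abs]
    exact mul_le_mul hCν (one_add_div_rpow_le (hq0 y) hν₀ hν hk) (rpow_nonneg hbase _)
      (by positivity)
  · exact (integrable_one_add_div_rpow_neg μ hq hc hqc hν₀ (by linarith)).const_mul _
  · filter_upwards [hst] with y hy
    have hlim := hC.mul (tendsto_one_add_div_rpow (q y) k)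
    by_cases hyt : y ∈ t
    · rw [indicator_of_mem hyt]
      exact hlim.congr' (hy.mono fun ν hν => (indicator_of_mem (hν.2 hyt) _).symm)
    · rw [indicator_of_notMem hyt]
      exact tendsto_const_nhds.congr'
        (hy.mono fun ν hν => (indicator_of_notMem (mt hν.1 hyt) _).symm)

end StudentKernel

lemma exists_pos_mul_norm_sq_le {E : Type*} [NormedAddCommGroup E] [NormedSpace ℝ E]
    [FiniteDimensional ℝ E] {q : E → ℝ} (hq : Continuous q) (hpos : ∀ y ≠ 0, 0 < q y)
    (hsmul : ∀ (t : ℝ) y, q (t • y) = t ^ 2 * q y) : ∃ c > 0, ∀ y, c * ‖y‖ ^ 2 ≤ q y := by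
  have hq0 : q 0 = 0 := by simpa using hsmul 0 0
  rcases subsingleton_or_nontrivial E with hE | hE
  · exact ⟨1, one_pos, fun y => by simp [Subsingleton.elim y 0, hq0]⟩
  obtain ⟨z, hz, hmin⟩ := (isCompact_sphere (0 : E) 1).exists_isMinOn
    (NormedSpace.sphere_nonempty.mpr zero_le_one) hq.continuousOn
  refine ⟨q z, hpos z (ne_zero_of_mem_unit_sphere ⟨z, hz⟩), fun y => ?_⟩
  rcases eq_or_ne y 0 with rfl | hy
  · simp [hq0]
  have hy' : ‖y‖⁻¹ • y ∈ Metric.sphere (0 : E) 1 := by simp [norm_smul, hy]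
  calc q z * ‖y‖ ^ 2 ≤ q (‖y‖⁻¹ • y) * ‖y‖ ^ 2 := by gcongr; exact hmin hy'
    _ = q y := by rw [hsmul]; field_simp

lemma quadForm_eq_dotProduct (m : ℕ) (R : Matrix (Fin m) (Fin m) ℝ) (y : Fin m → ℝ) :
    quadForm m R y = y ⬝ᵥ (R⁻¹ *ᵥ y) := by
  simp only [quadForm, dotProduct, mulVec, Finset.mul_sum]
  exact Finset.sum_congr rfl fun i _ => Finset.sum_congr rfl fun j _ => by ring

lemma continuous_quadForm (m : ℕ) (R : Matrix (Fin m) (Fin m) ℝ) :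
    Continuous (quadForm m R) := by
  unfold quadForm
  fun_prop

lemma exists_pos_mul_norm_sq_le_quadForm {m : ℕ} {R : Matrix (Fin m) (Fin m) ℝ}
    (hR : R.PosDef) : ∃ c > 0, ∀ y, c * ‖y‖ ^ 2 ≤ quadForm m R y := by
  refine exists_pos_mul_norm_sq_le (continuous_quadForm m R) (fun y hy => ?_) fun t y => ?_
  · simpa [quadForm_eq_dotProduct] using hR.inv.dotProduct_mulVec_pos hy
  · simp only [quadForm_eq_dotProduct, mulVec_smul, dotProduct_smul, smul_dotProduct,
      smul_eq_mul]
    ring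

lemma eventually_le_iff_of_tendsto_of_ne {α β : Type*} [LinearOrder β] [TopologicalSpace β]
    [OrderTopology β] {l : Filter α} {x : α → β} {x₀ y : β} (hx : Tendsto x l (𝓝 x₀))
    (hy : y ≠ x₀) : ∀ᶠ a in l, (y ≤ x a ↔ y ≤ x₀) := by
  rcases hy.lt_or_gt with hy | hy
  · filter_upwards [hx.eventually (eventually_gt_nhds hy)] with a ha
    exact iff_of_true ha.le hy.le
  · filter_upwards [hx.eventually (eventually_lt_nhds hy)] with a ha
    exact iff_of_false (not_le.2 ha) (not_le.2 hy)

lemma ae_eventually_mem_Iic_iff {ι α : Type*} [Fintype ι] {l : Filter α} {x : α → ι → ℝ}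
    {x₀ : ι → ℝ} (hx : ∀ i, Tendsto (fun a => x a i) l (𝓝 (x₀ i))) :
    ∀ᵐ y : ι → ℝ, ∀ᶠ a in l, (y ∈ Iic (x a) ↔ y ∈ Iic x₀) := by
  have hne : ∀ᵐ y : ι → ℝ, ∀ i, y i ≠ x₀ i := ae_all_iff.2 fun i => by
    simpa only [volume_pi] using
      Measure.ae_eval_ne (fun _ : ι => (volume : Measure ℝ)) i (x₀ i)
  filter_upwards [hne] with y hy
  filter_upwards [eventually_all.2 fun i => eventually_le_iff_of_tendsto_of_ne (hx i) (hy i)]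
    with a ha
  simp only [mem_Iic, Pi.le_def]
  exact forall_congr' ha

lemma tendsto_quantile_of_tendsto_cdf {ι α β : Type*} [LinearOrder α] [TopologicalSpace α]
    [OrderTopology α] [LinearOrder β] [TopologicalSpace β] [OrderTopology β] {l : Filter ι}
    {F : ι → α → β} {G : α → β} {x : ι → α} {x₀ : α} (hF : ∀ᶠ i in l, Monotone (F i))
    (hFG : ∀ a, Tendsto (fun i => F i a) l (𝓝 (G a))) (hG : StrictMono G)
    (hx : ∀ᶠ i in l, F i (x i) = G x₀) : Tendsto x l (𝓝 x₀) := by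
  refine tendsto_order.2 ⟨fun b hb => ?_, fun b hb => ?_⟩
  · filter_upwards [hF, hx, (hFG b).eventually (eventually_lt_nhds (hG hb))] with i hFi hxi hb'
    exact hFi.reflect_lt (hxi ▸ hb')
  · filter_upwards [hF, hx, (hFG b).eventually (eventually_gt_nhds (hG hb))] with i hFi hxi hb'
    exact hFi.reflect_lt (hxi ▸ hb')

lemma monotone_integral_Iic {f : ℝ → ℝ} (hf : Integrable f) (hf0 : ∀ x, 0 ≤ f x) :
    Monotone fun x => ∫ t in Iic x, f t := fun _ _ hxy =>
  setIntegral_mono_set hf.integrableOn (ae_of_all _ hf0) (Iic_subset_Iic.2 hxy).eventuallyLE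

lemma strictMono_integral_Iic {f : ℝ → ℝ} (hf : Integrable f) (hf0 : ∀ x, 0 < f x) :
    StrictMono fun x => ∫ t in Iic x, f t := fun x y hxy => by
  have hdiff := intervalIntegral.integral_Iic_sub_Iic hf.integrableOn hf.integrableOn
    (a := x) (b := y)
  have hpos := intervalIntegral.intervalIntegral_pos_of_pos_on hf.intervalIntegrable
    (fun t _ => hf0 t) hxy
  dsimp only
  linarith

lemma monotone_tCDF {ν : ℝ} (hν : 0 < ν) : Monotone (tCDF ν) := by
  have hconst : 0 ≤ Gamma ((ν + 1) / 2) / (Gamma (ν / 2) * √(ν * π)) :=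
    div_nonneg (Gamma_pos_of_pos (by positivity)).le
      (mul_nonneg (Gamma_pos_of_pos (by positivity)).le (sqrt_nonneg _))
  refine monotone_integral_Iic ?_ fun t => mul_nonneg hconst (rpow_nonneg (by positivity) _)
  simp_rw [neg_div]
  exact (integrable_one_add_div_rpow_neg volume (measurable_id.pow_const 2) one_pos
    (fun t => by simp) hν (by simp; linarith)).const_mul _

lemma tendsto_tCDF (x : ℝ) : Tendsto (fun ν => tCDF ν x) atTop (𝓝 (stdNormCDF x)) := by
  have hconst : Tendsto (fun ν : ℝ => Gamma ((ν + 1) / 2) / (Gamma (ν / 2) * √(ν * π))) atTop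
      (𝓝 (√(2 * π))⁻¹) := by
    simpa only [sqrt_eq_rpow] using tendsto_Gamma_half_add_div_Gamma_half_mul_rpow 1 zero_le_one
  exact tendsto_setIntegral_mul_one_add_div_rpow volume (q := fun t => t ^ 2)
    (measurable_id.pow_const 2) one_pos (fun t => by simp) hconst zero_le_one
    (fun _ => measurableSet_Iic) measurableSet_Iic
    (ae_of_all _ fun _ => Eventually.of_forall fun _ => Iff.rfl)

lemma strictMono_stdNormCDF : StrictMono stdNormCDF := by
  refine strictMono_integral_Iic ?_ fun t => by positivity
  refine ((integrable_exp_neg_mul_sq (b := 1 / 2) (by norm_num)).const_mul (√(2 * π))⁻¹).congr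
    (ae_of_all _ fun t => ?_)
  ring_nf

lemma tendsto_tQuantile {T : ℝ → ℝ} {x v : ℝ} (hT : ∀ ν > 0, tCDF ν (T ν) = v)
    (hx : stdNormCDF x = v) : Tendsto T atTop (𝓝 x) :=
  tendsto_quantile_of_tendsto_cdf ((eventually_gt_atTop 0).mono fun _ => monotone_tCDF)
    tendsto_tCDF strictMono_stdNormCDF
    ((eventually_gt_atTop 0).mono fun ν hν => (hT ν hν).trans hx.symm)

theorem t_copula_tendsto_gaussian_copula_general (m : ℕ) (R : Matrix (Fin m) (Fin m) ℝ)
    (hR : R.PosDef)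
    (Tinv : ℝ → ℝ → ℝ)
    (hTinv : ∀ ν > (0:ℝ), ∀ v ∈ Set.Ioo (0:ℝ) 1, tCDF ν (Tinv ν v) = v)
    (Φinv : ℝ → ℝ) (hΦinv : ∀ v ∈ Set.Ioo (0:ℝ) 1, stdNormCDF (Φinv v) = v)
    (u : Fin m → ℝ) (hu : ∀ i, u i ∈ Set.Ioo (0:ℝ) 1) :
    Tendsto (fun ν => mvtCDF m ν R (fun i => Tinv ν (u i))) atTop
      (nhds (mvNormCDF m R (fun i => Φinv (u i)))) := by
  obtain ⟨c, hc, hqc⟩ := exists_pos_mul_norm_sq_le_quadForm hR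
  have hquantile : ∀ i, Tendsto (fun ν => Tinv ν (u i)) atTop (𝓝 (Φinv (u i))) := fun i =>
    tendsto_tQuantile (fun ν hν => hTinv ν hν (u i) (hu i)) (hΦinv (u i) (hu i))
  have hconst : Tendsto (fun ν : ℝ => Gamma ((ν + m) / 2) /
      (Gamma (ν / 2) * (ν * π) ^ ((m : ℝ) / 2) * √R.det)) atTop
      (𝓝 ((2 * π) ^ ((m : ℝ) / 2) * √R.det)⁻¹) := by
    rw [mul_inv, ← div_eq_mul_inv]
    exact ((tendsto_Gamma_half_add_div_Gamma_half_mul_rpow m m.cast_nonneg).div_const _).congr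
      fun _ => div_div _ _ _
  exact tendsto_setIntegral_mul_one_add_div_rpow volume (continuous_quadForm m R).measurable
    hc hqc hconst m.cast_nonneg (fun _ => measurableSet_Iic) measurableSet_Iic
    (ae_eventually_mem_Iic_iff hquantile)

/-- as `ν → ∞`, the `t` copula with `ν` degrees of freedom and correlation
matrix `R` converges pointwise on `(0,1)^m` to the Gaussian copula with the same
correlation matrix:
`T_m(T⁻¹(u₁|ν),…,T⁻¹(u_m|ν) | ν, R) → Φ_m(Φ⁻¹(u₁),…,Φ⁻¹(u_m) | R)`. -/
theorem t_copula_tendsto_gaussian_copula (m : ℕ) (R : Matrix (Fin m) (Fin m) ℝ)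
    (hR : R.PosDef) (hdiag : ∀ i, R i i = 1)
    (Tinv : ℝ → ℝ → ℝ)
    (hTinv : ∀ ν > (0:ℝ), ∀ v ∈ Set.Ioo (0:ℝ) 1, tCDF ν (Tinv ν v) = v)
    (Φinv : ℝ → ℝ) (hΦinv : ∀ v ∈ Set.Ioo (0:ℝ) 1, stdNormCDF (Φinv v) = v)
    (u : Fin m → ℝ) (hu : ∀ i, u i ∈ Set.Ioo (0:ℝ) 1) :
    Tendsto (fun ν => mvtCDF m ν R (fun i => Tinv ν (u i))) atTop
      (nhds (mvNormCDF m R (fun i => Φinv (u i)))) :=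
  t_copula_tendsto_gaussian_copula_general m R hR Tinv hTinv Φinv hΦinv u hu
end
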